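/- Let R be a commutative ring with a unique nonzero nilpotent element x satisfying x² = 0, such that ann(x) = Z(R). Then γ_t(Γ(R)) = γ(Γ(R)) = 1. -/

import Mathlib

/-- Vertices of the zero-divisor graph: nonzero zero-divisors. -/
def zdVerts (R : Type*) [CommRing R] : Set R :=
  {x | x ≠ 0 ∧ ∃ y ≠ 0, x * y = 0}

/-- The set of all zero-divisors (including 0 when R is nontrivial). -/
def zdSet (R : Type*) [CommRing R] : Set R :=
  {x | ∃ y ≠ 0, x * y = 0}

/-- A dominating set of the zero-divisor graph Γ(R) (loops allowed: `x` is
adjacent to itself iff `x^2 = 0`). -/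
def IsDomSet (R : Type*) [CommRing R] (X : Set R) : Prop :=
  X ⊆ zdVerts R ∧ ∀ v ∈ zdVerts R, v ∉ X → ∃ x ∈ X, x * v = 0

/-- A total dominating set of Γ(R): every vertex has a neighbor in `X`
(possibly itself, if looped). -/
def IsTotDomSet (R : Type*) [CommRing R] (X : Set R) : Prop :=
  X ⊆ zdVerts R ∧ ∀ v ∈ zdVerts R, ∃ x ∈ X, x * v = 0

/-- The domination number γ(Γ(R)), as a cardinal. -/
noncomputable def domNum (R : Type*) [CommRing R] : Cardinal :=
  ⨅ X : {X : Set R // IsDomSet R X}, Cardinal.mk X.1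

/-- The total domination number γ_t(Γ(R)), as a cardinal. -/
noncomputable def totDomNum (R : Type*) [CommRing R] : Cardinal :=
  ⨅ X : {X : Set R // IsTotDomSet R X}, Cardinal.mk X.1

/-- The zero-divisor graph as a simple graph (loops discarded), used for girth. -/
def zdGraph (R : Type*) [CommRing R] : SimpleGraph R where
  Adj r s := r ≠ s ∧ r ≠ 0 ∧ s ≠ 0 ∧ r * s = 0
  symm := by constructor; intro r s h; exact ⟨h.1.symm, h.2.2.1, h.2.1, by rw [mul_comm]; exact h.2.2.2⟩
  loopless := by constructor; intro r h; exact h.1 rfl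

/-! Since `ann(x) = Z(R)`, the vertex `x` is adjacent to every vertex of `Γ(R)`, itself included
because `x² = 0`; so `{x}` is a total dominating set. Every total dominating set is dominating, and a
dominating set of a nonempty graph is nonempty, whence `1 ≤ γ ≤ γ_t ≤ 1`. -/

section DominationNumbers

variable {R : Type*} [CommRing R]

lemma IsTotDomSet.isDomSet {X : Set R} (hX : IsTotDomSet R X) : IsDomSet R X :=
  ⟨hX.1, fun v hv _ => hX.2 v hv⟩

lemma isTotDomSet_zdVerts : IsTotDomSet R (zdVerts R) := by
  refine ⟨subset_rfl, fun v ⟨hv, y, hy, hvy⟩ => ⟨y, ⟨hy, v, hv, ?_⟩, ?_⟩⟩ <;> rwa [mul_comm]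

lemma isTotDomSet_singleton {x : R} (hx : x ∈ zdVerts R) (hxv : ∀ v ∈ zdVerts R, x * v = 0) :
    IsTotDomSet R {x} :=
  ⟨Set.singleton_subset_iff.2 hx, fun v hv => ⟨x, rfl, hxv v hv⟩⟩

lemma IsDomSet.nonempty {X : Set R} (hX : IsDomSet R X) (hR : (zdVerts R).Nonempty) :
    X.Nonempty := by
  obtain ⟨v, hv⟩ := hR
  by_cases hvX : v ∈ X
  · exact ⟨v, hvX⟩
  · obtain ⟨x, hx, -⟩ := hX.2 v hv hvX
    exact ⟨x, hx⟩

lemma totDomNum_le_mk {X : Set R} (hX : IsTotDomSet R X) : totDomNum R ≤ Cardinal.mk X :=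
  ciInf_le' _ (⟨X, hX⟩ : {X : Set R // IsTotDomSet R X})

lemma domNum_le_totDomNum : domNum R ≤ totDomNum R := by
  have : Nonempty {X : Set R // IsTotDomSet R X} := ⟨⟨_, isTotDomSet_zdVerts⟩⟩
  exact le_ciInf fun X => ciInf_le' _ (⟨X.1, X.2.isDomSet⟩ : {X : Set R // IsDomSet R X})

lemma one_le_domNum (hR : (zdVerts R).Nonempty) : 1 ≤ domNum R := by
  have : Nonempty {X : Set R // IsDomSet R X} := ⟨⟨_, isTotDomSet_zdVerts.isDomSet⟩⟩
  exact le_ciInf fun X =>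
    Cardinal.one_le_iff_ne_zero.2 (Cardinal.mk_ne_zero_iff.2 (X.2.nonempty hR).to_subtype)

theorem totDomNum_eq_one_and_domNum_eq_one {x : R} (hx : x ∈ zdVerts R)
    (hxv : ∀ v ∈ zdVerts R, x * v = 0) : totDomNum R = 1 ∧ domNum R = 1 := by
  have hle : totDomNum R ≤ 1 :=
    (totDomNum_le_mk (isTotDomSet_singleton hx hxv)).trans_eq (Cardinal.mk_singleton x)
  have hge : 1 ≤ domNum R := one_le_domNum ⟨x, hx⟩
  have hmid : domNum R ≤ totDomNum R := domNum_le_totDomNum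
  exact ⟨le_antisymm hle (hge.trans hmid), le_antisymm (hmid.trans hle) hge⟩

end DominationNumbers

theorem stmt_14_general (R : Type*) [CommRing R] (x : R) (hx : x ≠ 0) (hx2 : x ^ 2 = 0)
    (hann : {r : R | r * x = 0} = zdSet R) :
    totDomNum R = 1 ∧ domNum R = 1 := by
  have hxx : x * x = 0 := by rwa [← sq]
  refine totDomNum_eq_one_and_domNum_eq_one ⟨hx, x, hx, hxx⟩ fun v hv => ?_
  have hvx : v * x = 0 := (hann ▸ hv.2 : v ∈ {r : R | r * x = 0})
  rw [mul_comm, hvx]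

theorem stmt_14 (R : Type*) [CommRing R] (x : R) (hx : x ≠ 0) (hx2 : x ^ 2 = 0)
    (huniq : ∀ y : R, y ≠ 0 → IsNilpotent y → y = x)
    (hann : {r : R | r * x = 0} = zdSet R) :
    totDomNum R = 1 ∧ domNum R = 1 :=
  stmt_14_general R x hx hx2 hann
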